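/- Let B be a finite Blaschke product of degree n ≥ 1. Then the limit, as |z| → 1 with z ∈ 𝔻, of |B'(z)|·(1 − |z|²)/(1 − |B(z)|²) equals 1; that is, for every ε > 0 there exists r ∈ (0,1) such that ||B'(z)|(1 − |z|²)/(1 − |B(z)|²) − 1| < ε whenever r < |z| < 1. -/

import Mathlib

/-!
Each factor `φ_a(w) = (a - w) / (1 - ā w)` is an automorphism of the disc:
`1 - |φ_a(w)|² = ρ_a(w) := (1 - |a|²)(1 - |w|²) / |1 - ā w|²`, and
`(1 - |w|²) φ_a'(w) / φ_a(w) = ρ_a(w) (w̄ - (1 - |w|²) / (a - w))`.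
Summing logarithmic derivatives, `(1 - |w|²) B'/B = w̄ S + O(S (1 - |w|))` with `S = Σ ρ_{z_k}(w)`,
while `1 - |B|² = 1 - ∏ (1 - ρ_{z_k})` lies between `|B|² S` and `S`. So the quotient is squeezed
between `|B| (|w| - β)` and `(|w| + β) / |B|` with `β = O(1 - |w|)`, and `|B(w)| → 1` as `|w| → 1`.
-/

open Complex ComplexConjugate Filter Topology

theorem ContinuousAt.tendsto_comap_norm_nhdsLT {E : Type*} [SeminormedAddCommGroup E]
    {g : ℝ → ℝ} (hg : ContinuousAt g 1) :
    Tendsto (fun w : E => g ‖w‖) (comap (‖·‖) (𝓝[<] 1)) (𝓝 (g 1)) :=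
  (hg.tendsto.mono_left nhdsWithin_le_nhds).comp tendsto_comap

namespace Finset

variable {ι R : Type*} [CommRing R] [LinearOrder R] [IsStrictOrderedRing R] (s : Finset ι)
  {t : ι → R}

theorem one_sub_prod_le_sum_one_sub (h0 : ∀ i ∈ s, 0 ≤ t i) (h1 : ∀ i ∈ s, t i ≤ 1) :
    1 - ∏ i ∈ s, t i ≤ ∑ i ∈ s, (1 - t i) := by
  induction s using cons_induction with
  | empty => simp
  | cons a s ha ih =>
    rw [forall_mem_cons] at h0 h1
    rw [prod_cons, sum_cons]
    have hP : ∏ i ∈ s, t i ≤ 1 := prod_le_one h0.2 h1.2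
    nlinarith [ih h0.2 h1.2, mul_le_mul_of_nonneg_right h1.1 (sub_nonneg.2 hP)]

theorem prod_mul_sum_one_sub_le_one_sub_prod (h0 : ∀ i ∈ s, 0 ≤ t i)
    (h1 : ∀ i ∈ s, t i ≤ 1) : (∏ i ∈ s, t i) * ∑ i ∈ s, (1 - t i) ≤ 1 - ∏ i ∈ s, t i := by
  induction s using cons_induction with
  | empty => simp
  | cons a s ha ih =>
    rw [forall_mem_cons] at h0 h1
    rw [prod_cons, sum_cons]
    have hP0 : 0 ≤ ∏ i ∈ s, t i := prod_nonneg h0.2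
    have hP1 : ∏ i ∈ s, t i ≤ 1 := prod_le_one h0.2 h1.2
    nlinarith [mul_le_mul_of_nonneg_left (ih h0.2 h1.2) h0.1,
      mul_nonneg (sub_nonneg.2 h1.1) (sub_nonneg.2 hP1), mul_nonneg hP0 (sub_nonneg.2 h1.1)]

end Finset

theorem abs_norm_sum_smul_sub_sub_le {ι E : Type*} [SeminormedAddCommGroup E] [NormedSpace ℝ E]
    (s : Finset ι) {ρ : ι → ℝ} {v : E} {c : ι → E} {β : ℝ} (hρ : ∀ i ∈ s, 0 ≤ ρ i)
    (hc : ∀ i ∈ s, ‖c i‖ ≤ β) :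
    |‖∑ i ∈ s, ρ i • (v - c i)‖ - (∑ i ∈ s, ρ i) * ‖v‖| ≤ (∑ i ∈ s, ρ i) * β := by
  have hsplit : ∑ i ∈ s, ρ i • (v - c i) = (∑ i ∈ s, ρ i) • v - ∑ i ∈ s, ρ i • c i := by
    simp only [smul_sub, Finset.sum_sub_distrib, Finset.sum_smul]
  have hnorm : ‖(∑ i ∈ s, ρ i) • v‖ = (∑ i ∈ s, ρ i) * ‖v‖ := by
    rw [norm_smul, Real.norm_of_nonneg (Finset.sum_nonneg hρ)]
  calc |‖∑ i ∈ s, ρ i • (v - c i)‖ - (∑ i ∈ s, ρ i) * ‖v‖|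
      ≤ ‖∑ i ∈ s, ρ i • c i‖ := by
        rw [hsplit, ← hnorm]
        simpa using abs_norm_sub_norm_le ((∑ i ∈ s, ρ i) • v - ∑ i ∈ s, ρ i • c i)
          ((∑ i ∈ s, ρ i) • v)
    _ ≤ ∑ i ∈ s, ρ i * β := by
        refine (norm_sum_le _ _).trans (Finset.sum_le_sum fun i hi => ?_)
        rw [norm_smul, Real.norm_of_nonneg (hρ i hi)]
        exact mul_le_mul_of_nonneg_left (hc i hi) (hρ i hi)
    _ = (∑ i ∈ s, ρ i) * β := (Finset.sum_mul ..).symm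

noncomputable def hyperbolicDeriv (f : ℂ → ℂ) (w : ℂ) : ℝ :=
  ‖deriv f w‖ * (1 - ‖w‖ ^ 2) / (1 - ‖f w‖ ^ 2)

theorem hyperbolicDeriv_const_mul {c : ℂ} (hc : ‖c‖ = 1) (f : ℂ → ℂ) :
    hyperbolicDeriv (fun w => c * f w) = hyperbolicDeriv f := by
  funext w
  simp [hyperbolicDeriv, deriv_const_mul_field', hc]

theorem hyperbolicDeriv_eq_norm_mul_norm_smul_logDeriv {f : ℂ → ℂ} {w : ℂ} (hw : ‖w‖ ≤ 1)
    (hf : f w ≠ 0) :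
    hyperbolicDeriv f w = ‖f w‖ * ‖(1 - ‖w‖ ^ 2) • logDeriv f w‖ / (1 - ‖f w‖ ^ 2) := by
  have hw2 : 0 ≤ 1 - ‖w‖ ^ 2 := by nlinarith [norm_nonneg w]
  rw [hyperbolicDeriv, logDeriv_apply, norm_smul, norm_div, Real.norm_of_nonneg hw2]
  field_simp [norm_ne_zero_iff.2 hf]

namespace Complex

theorem one_sub_norm_mul_le_norm_one_sub_conj_mul (a w : ℂ) :
    1 - ‖a‖ * ‖w‖ ≤ ‖1 - conj a * w‖ := by
  simpa [norm_mul] using norm_sub_norm_le (1 : ℂ) (conj a * w)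

theorem one_sub_conj_mul_ne_zero {a w : ℂ} (ha : ‖a‖ < 1) (hw : ‖w‖ ≤ 1) :
    1 - conj a * w ≠ 0 := by
  intro h
  have := one_sub_norm_mul_le_norm_one_sub_conj_mul a w
  rw [h, norm_zero] at this
  nlinarith [norm_nonneg a, norm_nonneg w]

theorem norm_one_sub_conj_mul_sq_sub_norm_sub_sq (a w : ℂ) :
    ‖1 - conj a * w‖ ^ 2 - ‖a - w‖ ^ 2 = (1 - ‖a‖ ^ 2) * (1 - ‖w‖ ^ 2) := by
  simp only [Complex.sq_norm, normSq_apply, sub_re, one_re, mul_re, conj_re, conj_im, sub_im,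
    one_im, mul_im]
  ring

end Complex

noncomputable def blaschkeFactor (a w : ℂ) : ℂ := (a - w) / (1 - conj a * w)

section BlaschkeFactor

variable {a w : ℂ}

theorem one_sub_norm_blaschkeFactor_sq (h : 1 - conj a * w ≠ 0) :
    1 - ‖blaschkeFactor a w‖ ^ 2 = (1 - ‖a‖ ^ 2) * (1 - ‖w‖ ^ 2) / ‖1 - conj a * w‖ ^ 2 := by
  rw [blaschkeFactor, norm_div, div_pow, ← norm_one_sub_conj_mul_sq_sub_norm_sub_sq, sub_div,
    div_self (pow_ne_zero 2 (norm_ne_zero_iff.2 h))]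

theorem hasDerivAt_blaschkeFactor (h : 1 - conj a * w ≠ 0) :
    HasDerivAt (blaschkeFactor a) ((conj a * a - 1) / (1 - conj a * w) ^ 2) w := by
  refine (((hasDerivAt_id' w).const_sub a).div
    (((hasDerivAt_id' w).const_mul (conj a)).const_sub 1) h).congr_deriv ?_
  ring

theorem mul_logDeriv_blaschkeFactor (haw : a ≠ w) (h : 1 - conj a * w ≠ 0) :
    ((1 - ‖w‖ ^ 2 : ℝ) : ℂ) * logDeriv (blaschkeFactor a) w =
      ((1 - ‖blaschkeFactor a w‖ ^ 2 : ℝ) : ℂ) *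
        (conj w - ((1 - ‖w‖ ^ 2 : ℝ) : ℂ) * (a - w)⁻¹) := by
  rw [logDeriv_apply, (hasDerivAt_blaschkeFactor h).deriv, one_sub_norm_blaschkeFactor_sq h]
  push_cast
  simp only [← mul_conj', map_sub, map_mul, map_one, conj_conj, blaschkeFactor]
  have h₁ : 1 - w * conj a ≠ 0 := by rwa [mul_comm]
  have h₂ : 1 - conj w * a ≠ 0 := by simpa [mul_comm] using (map_ne_zero (starRingEnd ℂ)).2 h
  field_simp [sub_ne_zero.2 haw]
  ring

theorem one_sub_norm_blaschkeFactor_sq_le (ha : ‖a‖ < 1) (hw : ‖w‖ ≤ 1) :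
    1 - ‖blaschkeFactor a w‖ ^ 2 ≤ (1 - ‖w‖ ^ 2) / (1 - ‖a‖) ^ 2 := by
  rw [one_sub_norm_blaschkeFactor_sq (one_sub_conj_mul_ne_zero ha hw)]
  have h1 : 1 - ‖a‖ ≤ ‖1 - conj a * w‖ := by
    nlinarith [one_sub_norm_mul_le_norm_one_sub_conj_mul a w, norm_nonneg a]
  have hw2 : 0 ≤ 1 - ‖w‖ ^ 2 := by nlinarith [norm_nonneg w]
  calc (1 - ‖a‖ ^ 2) * (1 - ‖w‖ ^ 2) / ‖1 - conj a * w‖ ^ 2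
      ≤ 1 * (1 - ‖w‖ ^ 2) / (1 - ‖a‖) ^ 2 := by
        gcongr
        nlinarith
    _ = (1 - ‖w‖ ^ 2) / (1 - ‖a‖) ^ 2 := by rw [one_mul]

theorem norm_blaschkeFactor_lt_one (ha : ‖a‖ < 1) (hw : ‖w‖ < 1) :
    ‖blaschkeFactor a w‖ < 1 := by
  have hden := one_sub_conj_mul_ne_zero ha hw.le
  have h := one_sub_norm_blaschkeFactor_sq hden
  have : 0 < (1 - ‖a‖ ^ 2) * (1 - ‖w‖ ^ 2) / ‖1 - conj a * w‖ ^ 2 := by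
    apply div_pos _ (by positivity)
    apply mul_pos <;> nlinarith [norm_nonneg a, norm_nonneg w]
  nlinarith [norm_nonneg (blaschkeFactor a w)]

theorem tendsto_norm_blaschkeFactor (ha : ‖a‖ < 1) :
    Tendsto (fun w => ‖blaschkeFactor a w‖) (comap (‖·‖) (𝓝[<] 1)) (𝓝 1) := by
  have hlower : Tendsto (fun w : ℂ => 1 - (1 - ‖w‖ ^ 2) / (1 - ‖a‖) ^ 2)
      (comap (‖·‖) (𝓝[<] 1)) (𝓝 1) := by
    have hg : ContinuousAt (fun t : ℝ => 1 - (1 - t ^ 2) / (1 - ‖a‖) ^ 2) 1 := by fun_prop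
    simpa using hg.tendsto_comap_norm_nhdsLT (E := ℂ)
  have hdisk : ∀ᶠ w : ℂ in comap (‖·‖) (𝓝[<] 1), ‖w‖ < 1 :=
    tendsto_comap.eventually self_mem_nhdsWithin
  refine tendsto_of_tendsto_of_tendsto_of_le_of_le' hlower tendsto_const_nhds
    (hdisk.mono fun w hw => ?_) (hdisk.mono fun w hw => (norm_blaschkeFactor_lt_one ha hw).le)
  nlinarith [one_sub_norm_blaschkeFactor_sq_le ha hw.le, norm_blaschkeFactor_lt_one ha hw,
    norm_nonneg (blaschkeFactor a w)]

end BlaschkeFactor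

section BlaschkeProduct

variable {ι : Type*} [Fintype ι] {a : ι → ℂ} {w : ℂ}

noncomputable def blaschkeProduct (a : ι → ℂ) (w : ℂ) : ℂ := ∏ i, blaschkeFactor (a i) w

theorem blaschkeProduct_ne_zero (ha : ∀ i, ‖a i‖ < 1) (hw : ‖w‖ ≤ 1) (haw : ∀ i, a i ≠ w) :
    blaschkeProduct a w ≠ 0 :=
  Finset.prod_ne_zero_iff.2 fun i _ =>
    div_ne_zero (sub_ne_zero.2 (haw i)) (one_sub_conj_mul_ne_zero (ha i) hw)

theorem smul_logDeriv_blaschkeProduct (ha : ∀ i, ‖a i‖ < 1) (hw : ‖w‖ ≤ 1) (haw : ∀ i, a i ≠ w) :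
    (1 - ‖w‖ ^ 2) • logDeriv (blaschkeProduct a) w =
      ∑ i, (1 - ‖blaschkeFactor (a i) w‖ ^ 2) • (conj w - (1 - ‖w‖ ^ 2) • (a i - w)⁻¹) := by
  have hden i := one_sub_conj_mul_ne_zero (ha i) hw
  simp only [Complex.real_smul]
  unfold blaschkeProduct
  rw [logDeriv_prod (f := fun i => blaschkeFactor (a i))
    (fun i _ => div_ne_zero (sub_ne_zero.2 (haw i)) (hden i))
    (fun i _ => (hasDerivAt_blaschkeFactor (hden i)).differentiableAt), Finset.mul_sum]
  exact Finset.sum_congr rfl fun i _ => mul_logDeriv_blaschkeFactor (haw i) (hden i)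

theorem one_sub_norm_blaschkeProduct_sq_le (ha : ∀ i, ‖a i‖ < 1) (hw : ‖w‖ < 1) :
    1 - ‖blaschkeProduct a w‖ ^ 2 ≤ ∑ i, (1 - ‖blaschkeFactor (a i) w‖ ^ 2) := by
  rw [blaschkeProduct, norm_prod, ← Finset.prod_pow]
  exact Finset.one_sub_prod_le_sum_one_sub _ (fun i _ => sq_nonneg _)
    (fun i _ => pow_le_one₀ (norm_nonneg _) (norm_blaschkeFactor_lt_one (ha i) hw).le)

theorem norm_blaschkeProduct_sq_mul_le (ha : ∀ i, ‖a i‖ < 1) (hw : ‖w‖ < 1) :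
    ‖blaschkeProduct a w‖ ^ 2 * ∑ i, (1 - ‖blaschkeFactor (a i) w‖ ^ 2) ≤
      1 - ‖blaschkeProduct a w‖ ^ 2 := by
  rw [blaschkeProduct, norm_prod, ← Finset.prod_pow]
  exact Finset.prod_mul_sum_one_sub_le_one_sub_prod _ (fun i _ => sq_nonneg _)
    (fun i _ => pow_le_one₀ (norm_nonneg _) (norm_blaschkeFactor_lt_one (ha i) hw).le)

theorem abs_norm_smul_logDeriv_blaschkeProduct_sub_le (ha : ∀ i, ‖a i‖ < 1) (hw : ‖w‖ < 1)
    (haw : ∀ i, ‖a i‖ < ‖w‖) :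
    |‖(1 - ‖w‖ ^ 2) • logDeriv (blaschkeProduct a) w‖ -
        (∑ i, (1 - ‖blaschkeFactor (a i) w‖ ^ 2)) * ‖w‖| ≤
      (∑ i, (1 - ‖blaschkeFactor (a i) w‖ ^ 2)) * ∑ i, (1 - ‖w‖ ^ 2) / (‖w‖ - ‖a i‖) := by
  have hne i : a i ≠ w := fun h => (haw i).ne (by rw [h])
  have hw2 : 0 ≤ 1 - ‖w‖ ^ 2 := by nlinarith [norm_nonneg w]
  have hρ : ∀ i ∈ Finset.univ, 0 ≤ 1 - ‖blaschkeFactor (a i) w‖ ^ 2 := fun i _ =>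
    sub_nonneg.2 (pow_le_one₀ (norm_nonneg _) (norm_blaschkeFactor_lt_one (ha i) hw).le)
  have hc : ∀ i ∈ Finset.univ,
      ‖(1 - ‖w‖ ^ 2) • (a i - w)⁻¹‖ ≤ ∑ j, (1 - ‖w‖ ^ 2) / (‖w‖ - ‖a j‖) := by
    intro i _
    have hdist : ‖w‖ - ‖a i‖ ≤ ‖a i - w‖ := by
      simpa [norm_sub_rev] using norm_sub_norm_le w (a i)
    calc ‖(1 - ‖w‖ ^ 2) • (a i - w)⁻¹‖ = (1 - ‖w‖ ^ 2) / ‖a i - w‖ := by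
          rw [norm_smul, norm_inv, Real.norm_of_nonneg hw2, div_eq_mul_inv]
      _ ≤ (1 - ‖w‖ ^ 2) / (‖w‖ - ‖a i‖) := by gcongr; linarith [haw i]
      _ ≤ ∑ j, (1 - ‖w‖ ^ 2) / (‖w‖ - ‖a j‖) :=
          Finset.single_le_sum (f := fun j => (1 - ‖w‖ ^ 2) / (‖w‖ - ‖a j‖))
            (fun j _ => div_nonneg hw2 (sub_nonneg.2 (haw j).le)) (Finset.mem_univ i)
  have key := abs_norm_sum_smul_sub_sub_le (v := conj w) _ hρ hc
  rwa [Complex.norm_conj, ← smul_logDeriv_blaschkeProduct ha hw.le hne] at key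

theorem hyperbolicDeriv_blaschkeProduct_mem_Icc [Nonempty ι] (ha : ∀ i, ‖a i‖ < 1)
    (hw : ‖w‖ < 1) (haw : ∀ i, ‖a i‖ < ‖w‖) :
    hyperbolicDeriv (blaschkeProduct a) w ∈
      Set.Icc (‖blaschkeProduct a w‖ * (‖w‖ - ∑ i, (1 - ‖w‖ ^ 2) / (‖w‖ - ‖a i‖)))
        ((‖w‖ + ∑ i, (1 - ‖w‖ ^ 2) / (‖w‖ - ‖a i‖)) / ‖blaschkeProduct a w‖) := by
  have hne i : a i ≠ w := fun h => (haw i).ne (by rw [h])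
  have hB := blaschkeProduct_ne_zero ha hw.le hne
  rw [hyperbolicDeriv_eq_norm_mul_norm_smul_logDeriv hw.le hB]
  have hX := abs_le.1 (abs_norm_smul_logDeriv_blaschkeProduct_sub_le ha hw haw)
  have hD₁ := one_sub_norm_blaschkeProduct_sq_le ha hw
  have hD₂ := norm_blaschkeProduct_sq_mul_le ha hw
  set P := ‖blaschkeProduct a w‖
  set X := ‖(1 - ‖w‖ ^ 2) • logDeriv (blaschkeProduct a) w‖
  set S := ∑ i, (1 - ‖blaschkeFactor (a i) w‖ ^ 2)
  set β := ∑ i, (1 - ‖w‖ ^ 2) / (‖w‖ - ‖a i‖)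
  have hP : 0 < P := norm_pos_iff.2 hB
  have hS : 0 < S := Finset.sum_pos
    (fun i _ => sub_pos.2 (pow_lt_one₀ (norm_nonneg _) (norm_blaschkeFactor_lt_one (ha i) hw)
      two_ne_zero)) Finset.univ_nonempty
  have hβ : 0 ≤ β := Finset.sum_nonneg fun i _ =>
    div_nonneg (by nlinarith [norm_nonneg w]) (sub_nonneg.2 (haw i).le)
  have hD : 0 < 1 - P ^ 2 := by nlinarith [mul_pos (pow_pos hP 2) hS]
  constructor
  · rw [le_div_iff₀ hD]
    rcases le_total 0 (‖w‖ - β) with h | h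
    · nlinarith [mul_le_mul_of_nonneg_left hD₁ h]
    · nlinarith [mul_nonneg hP.le (norm_nonneg _ : 0 ≤ X),
        mul_nonneg (mul_nonneg hP.le (neg_nonneg.2 h)) hD.le]
  · rw [div_le_div_iff₀ hD hP]
    nlinarith [mul_le_mul_of_nonneg_left hD₂ (add_nonneg (norm_nonneg w) hβ)]

theorem tendsto_hyperbolicDeriv_blaschkeProduct [Nonempty ι] (ha : ∀ i, ‖a i‖ < 1) :
    Tendsto (hyperbolicDeriv (blaschkeProduct a)) (comap (‖·‖) (𝓝[<] 1)) (𝓝 1) := by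
  have hnorm : Tendsto (‖·‖) (comap (‖·‖) (𝓝[<] 1)) (𝓝 (1 : ℝ)) :=
    continuousAt_id.tendsto_comap_norm_nhdsLT (E := ℂ)
  have hβ : Tendsto (fun w : ℂ => ∑ i, (1 - ‖w‖ ^ 2) / (‖w‖ - ‖a i‖))
      (comap (‖·‖) (𝓝[<] 1)) (𝓝 0) := by
    rw [← Finset.sum_const_zero (s := (Finset.univ : Finset ι))]
    refine tendsto_finsetSum _ fun i _ => ?_
    have hg : ContinuousAt (fun t : ℝ => (1 - t ^ 2) / (t - ‖a i‖)) 1 :=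
      ContinuousAt.div (by fun_prop) (by fun_prop) (sub_ne_zero.2 (ha i).ne')
    simpa using hg.tendsto_comap_norm_nhdsLT (E := ℂ)
  have hP : Tendsto (fun w => ‖blaschkeProduct a w‖) (comap (‖·‖) (𝓝[<] 1)) (𝓝 1) := by
    simp only [blaschkeProduct, norm_prod]
    simpa using tendsto_finsetProd _ fun i _ => tendsto_norm_blaschkeFactor (ha i)
  have hnear : ∀ᶠ w : ℂ in comap (‖·‖) (𝓝[<] 1), (∀ i, ‖a i‖ < ‖w‖) ∧ ‖w‖ < 1 :=
    tendsto_comap.eventually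
      ((eventually_all.2 fun i =>
        eventually_nhdsWithin_of_eventually_nhds (eventually_gt_nhds (ha i))).and
        self_mem_nhdsWithin)
  have hlower : Tendsto
      (fun w => ‖blaschkeProduct a w‖ * (‖w‖ - ∑ i, (1 - ‖w‖ ^ 2) / (‖w‖ - ‖a i‖)))
      (comap (‖·‖) (𝓝[<] 1)) (𝓝 1) := by
    simpa using hP.mul (hnorm.sub hβ)
  have hupper : Tendsto
      (fun w => (‖w‖ + ∑ i, (1 - ‖w‖ ^ 2) / (‖w‖ - ‖a i‖)) / ‖blaschkeProduct a w‖)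
      (comap (‖·‖) (𝓝[<] 1)) (𝓝 1) := by
    have h := (hnorm.add hβ).div hP one_ne_zero
    rw [add_zero, div_one] at h
    exact h
  exact tendsto_of_tendsto_of_tendsto_of_le_of_le' hlower hupper
    (hnear.mono fun w hw => (hyperbolicDeriv_blaschkeProduct_mem_Icc ha hw.2 hw.1).1)
    (hnear.mono fun w hw => (hyperbolicDeriv_blaschkeProduct_mem_Icc ha hw.2 hw.1).2)

end BlaschkeProduct

theorem exists_forall_abs_sub_lt_of_tendsto_comap_norm {E : Type*} [SeminormedAddCommGroup E]
    {f : E → ℝ} {L ε : ℝ} (hf : Tendsto f (comap (‖·‖) (𝓝[<] 1)) (𝓝 L)) (hε : 0 < ε) :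
    ∃ r : ℝ, 0 < r ∧ r < 1 ∧ ∀ w : E, r < ‖w‖ → ‖w‖ < 1 → |f w - L| < ε := by
  obtain ⟨t, ht, hsub⟩ := mem_comap.1 (hf (Metric.ball_mem_nhds L hε))
  obtain ⟨l, hl, hlt⟩ := mem_nhdsLT_iff_exists_Ioo_subset.1 ht
  refine ⟨max l (1 / 2), by positivity, max_lt hl (by norm_num), fun w hrw hw => ?_⟩
  exact hsub (hlt ⟨(le_max_left _ _).trans_lt hrw, hw⟩)

/-- Let `B` be a finite Blaschke product of degree `n ≥ 1`.  Then
`|B'(z)| (1 − |z|²)/(1 − |B(z)|²) → 1` as `|z| → 1` with `z ∈ 𝔻`: for every `ε > 0`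
there is `r ∈ (0,1)` such that the quantity is within `ε` of `1` whenever
`r < |z| < 1`. -/
theorem blaschke_angular_derivative_limit (n : ℕ) (hn : 1 ≤ n) (α : ℝ) (z : Fin n → ℂ)
    (hz : ∀ k, ‖z k‖ < 1) (B : ℂ → ℂ)
    (hB : B = fun w => Complex.exp (α * Complex.I) * ∏ k, (z k - w) / (1 - conj (z k) * w))
    (ε : ℝ) (hε : 0 < ε) :
    ∃ r : ℝ, 0 < r ∧ r < 1 ∧ ∀ w : ℂ, r < ‖w‖ → ‖w‖ < 1 →
      |‖deriv B w‖ * (1 - ‖w‖ ^ 2) / (1 - ‖B w‖ ^ 2)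
        - 1| < ε := by
  have : Nonempty (Fin n) := ⟨⟨0, hn⟩⟩
  have hlim : Tendsto (hyperbolicDeriv fun w => exp (α * I) * blaschkeProduct z w)
      (comap (‖·‖) (𝓝[<] 1)) (𝓝 1) := by
    rw [hyperbolicDeriv_const_mul (norm_exp_ofReal_mul_I α)]
    exact tendsto_hyperbolicDeriv_blaschkeProduct hz
  subst hB
  exact exists_forall_abs_sub_lt_of_tendsto_comap_norm hlim hε
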